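/- arXiv:1604.08793 — 2 statements merged into one kernel-verified Lean document; each statement's English description precedes it below -/
import Mathlib

section
/- Let a1, …, a5 > 0, b1 = (a1 + a2)/(1 + a4·a5), b3 = a5/(1 + a4·a5), and θ1, θ2, θ3, θ4 defined by θ1 = a3/(1 + a3·a4·b1), θ2 = (a3·b1 + b3)/(1 + a3·a4·b1), θ3 = a3·b3/(1 + a3·a4·b1), θ4 = a3·a4/(1 + a3·a4·b1). Suppose V, I ∈ ℝ satisfy the IV equation I = a1 − a2·(exp(a3·(V + a4·I)) − 1) − a5·(V + a4·I). Then a1 = −[θ1²·I + θ1·θ3·V + θ1²·(θ1·θ2 − θ3)/(θ3·θ4 − θ1²)] · exp(((θ3·θ4 − θ1²)/(θ1 − θ2·θ4))·(V + (θ4/θ1)·I)) / (θ3·θ4 − θ1²) + θ1²·(θ1·θ2 − θ3)/(θ3·θ4 − θ1²)². -/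
/-!
Both the exponent and the affine coefficients of the right-hand side collapse back to the array
parameters: with `D = 1 + a4 a5` and `K = 1 + a3 a4 b1`, one has `θ4 / θ1 = a4`,
`θ3 θ4 - θ1² = -a3² / (K² D)`, `θ1 - θ2 θ4 = a3 / (K² D)` and `θ1 θ2 - θ3 = a3² b1 / (K² D)`.
The right-hand side thus becomes `(D I + a5 V - S) e^{-a3 (V + a4 I)} + S` with `S = b1 D = a1 + a2`,
and this equals `a1` because the IV equation says `a2 e^{a3 (V + a4 I)} = S - D I - a5 V`.
-/

section IVCurve

variable {a1 a2 a3 a4 a5 V I : ℝ}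

theorem mul_exp_eq_of_iv
    (hiv : I = a1 - a2 * (Real.exp (a3 * (V + a4 * I)) - 1) - a5 * (V + a4 * I)) :
    a2 * Real.exp (a3 * (V + a4 * I)) = a1 + a2 - (1 + a4 * a5) * I - a5 * V := by
  linear_combination hiv

theorem eq_affine_mul_exp_neg_add_of_iv
    (hiv : I = a1 - a2 * (Real.exp (a3 * (V + a4 * I)) - 1) - a5 * (V + a4 * I)) :
    a1 = ((1 + a4 * a5) * I + a5 * V - (a1 + a2)) * Real.exp (-(a3 * (V + a4 * I)))
      + (a1 + a2) := by
  have hcoef :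
      (1 + a4 * a5) * I + a5 * V - (a1 + a2) = -(a2 * Real.exp (a3 * (V + a4 * I))) := by
    linear_combination mul_exp_eq_of_iv hiv
  rw [hcoef, neg_mul, mul_assoc, ← Real.exp_add, add_neg_cancel, Real.exp_zero]
  ring

end IVCurve

section Theta

variable {a3 a4 a5 b1 b3 D K θ1 θ2 θ3 θ4 : ℝ}

theorem theta4_div_theta1 (ha3 : a3 ≠ 0) (hK0 : K ≠ 0)
    (hθ1 : θ1 = a3 / K) (hθ4 : θ4 = a3 * a4 / K) : θ4 / θ1 = a4 := by
  subst hθ1 hθ4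
  field_simp

theorem theta3_mul_theta4_sub_theta1_sq (hD : D = 1 + a4 * a5) (hD0 : D ≠ 0) (hK0 : K ≠ 0)
    (hb3 : b3 = a5 / D) (hθ1 : θ1 = a3 / K) (hθ3 : θ3 = a3 * b3 / K) (hθ4 : θ4 = a3 * a4 / K) :
    θ3 * θ4 - θ1 ^ 2 = -a3 ^ 2 / (K ^ 2 * D) := by
  subst hb3 hθ1 hθ3 hθ4
  field_simp
  rw [hD]
  ring

theorem theta1_sub_theta2_mul_theta4 (hD : D = 1 + a4 * a5) (hK : K = 1 + a3 * a4 * b1)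
    (hD0 : D ≠ 0) (hK0 : K ≠ 0) (hb3 : b3 = a5 / D)
    (hθ1 : θ1 = a3 / K) (hθ2 : θ2 = (a3 * b1 + b3) / K) (hθ4 : θ4 = a3 * a4 / K) :
    θ1 - θ2 * θ4 = a3 / (K ^ 2 * D) := by
  subst hb3 hθ1 hθ2 hθ4
  field_simp
  rw [hD, hK]
  ring

theorem theta1_mul_theta2_sub_theta3 (hD : D = 1 + a4 * a5) (hK : K = 1 + a3 * a4 * b1)
    (hD0 : D ≠ 0) (hK0 : K ≠ 0) (hb3 : b3 = a5 / D)
    (hθ1 : θ1 = a3 / K) (hθ2 : θ2 = (a3 * b1 + b3) / K) (hθ3 : θ3 = a3 * b3 / K) :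
    θ1 * θ2 - θ3 = a3 ^ 2 * b1 / (K ^ 2 * D) := by
  subst hb3 hθ1 hθ2 hθ3
  field_simp
  rw [hD, hK]
  ring

end Theta

theorem a1_recovery_from_theta
    (a1 a2 a3 a4 a5 b1 b3 θ1 θ2 θ3 θ4 : ℝ)
    (ha1 : 0 < a1) (ha2 : 0 < a2) (ha3 : 0 < a3) (ha4 : 0 < a4) (ha5 : 0 < a5)
    (hb1 : b1 = (a1 + a2) / (1 + a4 * a5))
    (hb3 : b3 = a5 / (1 + a4 * a5))
    (hθ1 : θ1 = a3 / (1 + a3 * a4 * b1))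
    (hθ2 : θ2 = (a3 * b1 + b3) / (1 + a3 * a4 * b1))
    (hθ3 : θ3 = a3 * b3 / (1 + a3 * a4 * b1))
    (hθ4 : θ4 = a3 * a4 / (1 + a3 * a4 * b1))
    (V I : ℝ)
    (hiv : I = a1 - a2 * (Real.exp (a3 * (V + a4 * I)) - 1) - a5 * (V + a4 * I)) :
    a1 = -((θ1 ^ 2 * I + θ1 * θ3 * V
            + θ1 ^ 2 * (θ1 * θ2 - θ3) / (θ3 * θ4 - θ1 ^ 2))
          * Real.exp ((θ3 * θ4 - θ1 ^ 2) / (θ1 - θ2 * θ4) * (V + θ4 / θ1 * I))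
          / (θ3 * θ4 - θ1 ^ 2))
        + θ1 ^ 2 * (θ1 * θ2 - θ3) / (θ3 * θ4 - θ1 ^ 2) ^ 2 := by
  have hD : 0 < 1 + a4 * a5 := by positivity
  have hK : 0 < 1 + a3 * a4 * b1 := by rw [hb1]; positivity
  have hS : a1 + a2 = b1 * (1 + a4 * a5) := by
    rw [hb1]
    field_simp
  set D := 1 + a4 * a5 with hDdef
  set K := 1 + a3 * a4 * b1 with hKdef
  have hdet := theta3_mul_theta4_sub_theta1_sq hDdef hD.ne' hK.ne' hb3 hθ1 hθ3 hθ4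
  have hdiff := theta1_sub_theta2_mul_theta4 hDdef hKdef hD.ne' hK.ne' hb3 hθ1 hθ2 hθ4
  have hcross := theta1_mul_theta2_sub_theta3 hDdef hKdef hD.ne' hK.ne' hb3 hθ1 hθ2 hθ3
  have hexp :
      (θ3 * θ4 - θ1 ^ 2) / (θ1 - θ2 * θ4) * (V + θ4 / θ1 * I) = -(a3 * (V + a4 * I)) := by
    rw [hdet, hdiff, theta4_div_theta1 ha3.ne' hK.ne' hθ1 hθ4]
    field_simp
  nth_rewrite 1 [eq_affine_mul_exp_neg_add_of_iv hiv]
  rw [hexp, hcross, hdet, hθ1, hθ3, hb3, hS]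
  field_simp
  ring
end

section
/- Let a1, …, a5 > 0, b1 = (a1 + a2)/(1 + a4·a5), b2 = a2/(1 + a4·a5), b3 = a5/(1 + a4·a5), g(V) = (2·b3·V − b1)/(1 + a3·V) + b1 − b3·V, and H(V) = b1 − b2·(1 + a3·V)·exp(a3·(V + a4·g(V))) − 2·b3·V, and let V* > 0 satisfy H(V*) = 0. Then H(V) > 0 for every V with 0 < V < V*, and H(V) < 0 for every V > V*. -/
/-!
Both the prefactor `1 + a₃V` and the exponent `a₃(V + a₄ g(V))` are nondecreasing for
`V ≥ 0`: the exponent is `(1 - a₄b₃)V` plus a constant plus a nonnegative multiple of the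
Möbius map `V ↦ (2b₃V - b₁)/(1 + a₃V)`, whose determinant `2b₃ + a₃b₁` is positive, and
`a₄b₃ < 1`. Hence `H` is `b₁` minus a nondecreasing function minus `2b₃V`, so it is strictly
decreasing on `[0, ∞)` and changes sign exactly at its zero `V*`.
-/

open Set Real

-- `g` and `H` of the statement.
noncomputable def mppCurrent (a3 b1 b3 V : ℝ) : ℝ :=
  (2 * b3 * V - b1) / (1 + a3 * V) + b1 - b3 * V

noncomputable def powerSlope (a3 a4 b1 b2 b3 V : ℝ) : ℝ :=
  b1 - b2 * (1 + a3 * V) * exp (a3 * (V + a4 * mppCurrent a3 b1 b3 V)) - 2 * b3 * V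

lemma monotoneOn_affine_div_affine {p q a : ℝ} (ha : 0 ≤ a) (hpq : 0 ≤ p + a * q) :
    MonotoneOn (fun V => (p * V - q) / (1 + a * V)) (Ici 0) := by
  intro x (hx : 0 ≤ x) y (hy : 0 ≤ y) hxy
  rw [div_le_div_iff₀ (by positivity) (by positivity)]
  nlinarith [mul_nonneg hpq (sub_nonneg.2 hxy)]

section

variable {a3 a4 b1 b2 b3 : ℝ}

lemma monotoneOn_add_mul_mppCurrent (ha3 : 0 ≤ a3) (ha4 : 0 ≤ a4) (hb1 : 0 ≤ b1)
    (hb3 : 0 ≤ b3) (hab : a4 * b3 ≤ 1) :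
    MonotoneOn (fun V => V + a4 * mppCurrent a3 b1 b3 V) (Ici 0) := by
  intro x hx y hy hxy
  have hmob :=
    monotoneOn_affine_div_affine (p := 2 * b3) (q := b1) ha3 (by positivity) hx hy hxy
  simp only [mppCurrent] at hmob ⊢
  nlinarith [mul_le_mul_of_nonneg_left hmob ha4, mul_nonneg (sub_nonneg.2 hab) (sub_nonneg.2 hxy)]

lemma strictAntiOn_powerSlope (ha3 : 0 ≤ a3) (ha4 : 0 ≤ a4) (hb1 : 0 ≤ b1)
    (hb2 : 0 ≤ b2) (hb3 : 0 < b3) (hab : a4 * b3 ≤ 1) :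
    StrictAntiOn (powerSlope a3 a4 b1 b2 b3) (Ici 0) := by
  intro x (hx : 0 ≤ x) y (hy : 0 ≤ y) hxy
  have hexponent := monotoneOn_add_mul_mppCurrent ha3 ha4 hb1 hb3.le hab hx hy hxy.le
  have hgrowth : (1 + a3 * x) * exp (a3 * (x + a4 * mppCurrent a3 b1 b3 x)) ≤
      (1 + a3 * y) * exp (a3 * (y + a4 * mppCurrent a3 b1 b3 y)) := by
    gcongr
  simp only [powerSlope]
  nlinarith [mul_le_mul_of_nonneg_left hgrowth hb2]

end

theorem H_sign_around_mpp
    (a1 a2 a3 a4 a5 b1 b2 b3 : ℝ)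
    (ha1 : 0 < a1) (ha2 : 0 < a2) (ha3 : 0 < a3) (ha4 : 0 < a4) (ha5 : 0 < a5)
    (hb1 : b1 = (a1 + a2) / (1 + a4 * a5))
    (hb2 : b2 = a2 / (1 + a4 * a5))
    (hb3 : b3 = a5 / (1 + a4 * a5))
    (g H : ℝ → ℝ)
    (hg : ∀ V, g V = (2 * b3 * V - b1) / (1 + a3 * V) + b1 - b3 * V)
    (hH : ∀ V, H V = b1 - b2 * (1 + a3 * V) * Real.exp (a3 * (V + a4 * g V)) - 2 * b3 * V)
    (Vstar : ℝ) (hVstar : 0 < Vstar) (hzero : H Vstar = 0) :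
    (∀ V : ℝ, 0 < V → V < Vstar → 0 < H V) ∧
    (∀ V : ℝ, Vstar < V → H V < 0) := by
  have hden : 0 < 1 + a4 * a5 := by positivity
  have hab : a4 * b3 ≤ 1 := by
    rw [hb3, mul_div_assoc', div_le_one hden]
    linarith
  have hanti : StrictAntiOn H (Ici 0) := by
    have hH' : H = powerSlope a3 a4 b1 b2 b3 := funext fun V => by
      rw [hH, hg]
      rfl
    rw [hH']
    exact strictAntiOn_powerSlope ha3.le ha4.le (by rw [hb1]; positivity)
      (by rw [hb2]; positivity) (by rw [hb3]; positivity) hab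
  refine ⟨fun V hV hlt => ?_, fun V hgt => ?_⟩
  · simpa [hzero] using hanti hV.le hVstar.le hlt
  · simpa [hzero] using hanti hVstar.le (hVstar.trans hgt).le hgt
end
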